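/- arXiv:0910.3362 — 4 statements merged into one kernel-verified Lean document; each statement's English description precedes it below -/
import Mathlib

section
/- Let (X,T) and (Y,S) be topological dynamical systems and let z ∈ Y be a recurrent point. Then for every x ∈ X there exists a point y in the orbit closure of x such that (x,y) is a proximal pair in (X,T) and (y,z) is a recurrent point of the product system (X×Y, T×S). -/
open Set Filter Topology Function

namespace PaperFormal

/-- The return-time set `N(x,U) = {n ∈ ℤ₊ : Tⁿ x ∈ U}`. -/
def retTimes {X : Type} (T : X → X) (x : X) (U : Set X) : Set ℕ :=
  {n : ℕ | T^[n] x ∈ U}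

/-- A point is recurrent if `N(x,U)` is infinite for every neighborhood `U` of `x`. -/
def RecurrentPt {X : Type} [TopologicalSpace X] (T : X → X) (x : X) : Prop :=
  ∀ U ∈ nhds x, (retTimes T x U).Infinite

/-- The (forward) orbit closure of a point. -/
def orbitClosure {X : Type} [TopologicalSpace X] (T : X → X) (x : X) : Set X :=
  closure (Set.range fun n : ℕ => T^[n] x)

/-- A pair `(x,y)` is proximal if `lim T^{nᵢ} x = lim T^{nᵢ} y` along some sequence `nᵢ`. -/
def ProximalPair {X : Type} [TopologicalSpace X] (T : X → X) (x y : X) : Prop :=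
  ∃ (u : ℕ → ℕ) (z : X),
    Tendsto (fun i => T^[u i] x) atTop (nhds z) ∧
    Tendsto (fun i => T^[u i] y) atTop (nhds z)

/-- A point `x` is distal if every `y` in its orbit closure proximal to `x` equals `x`. -/
def DistalPt {X : Type} [TopologicalSpace X] (T : X → X) (x : X) : Prop :=
  ∀ y ∈ orbitClosure T x, ProximalPair T x y → y = x

/-- `A` is a minimal set: nonempty, closed, invariant, with no proper such subset. -/
def IsMinimalSet {X : Type} [TopologicalSpace X] (T : X → X) (A : Set X) : Prop :=
  A.Nonempty ∧ IsClosed A ∧ Set.MapsTo T A A ∧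
    ∀ B ⊆ A, B.Nonempty → IsClosed B → Set.MapsTo T B B → B = A

/-- A point is minimal (almost periodic) if its orbit closure is a minimal set. -/
def IsMinimalPt {X : Type} [TopologicalSpace X] (T : X → X) (x : X) : Prop :=
  IsMinimalSet T (orbitClosure T x)

/-- A minimal system: no proper nonempty closed invariant subset. -/
def MinimalSys {X : Type} [TopologicalSpace X] (T : X → X) : Prop :=
  ∀ B : Set X, B.Nonempty → IsClosed B → Set.MapsTo T B B → B = Set.univ

/-- A transitive system: `N(U,V)` is infinite for all opene `U`, `V`. -/
def TransitiveSys {X : Type} [TopologicalSpace X] (T : X → X) : Prop :=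
  ∀ U V : Set X, IsOpen U → IsOpen V → U.Nonempty → V.Nonempty →
    {n : ℕ | (U ∩ T^[n] ⁻¹' V).Nonempty}.Infinite

/-- Transitivity of the subsystem on an invariant subset `A` (relative open sets). -/
def TransitiveOn {X : Type} [TopologicalSpace X] (T : X → X) (A : Set X) : Prop :=
  ∀ U V : Set X, IsOpen U → IsOpen V → (U ∩ A).Nonempty → (V ∩ A).Nonempty →
    {n : ℕ | (U ∩ A ∩ T^[n] ⁻¹' V).Nonempty}.Infinite

/-- A transitive point: a point with dense forward orbit. -/
def TransPt {X : Type} [TopologicalSpace X] (T : X → X) (x : X) : Prop :=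
  Dense (Set.range fun n : ℕ => T^[n] x)

/-- Finite sums of the sequence `p` over nonempty finite index sets contained in `[n,∞)`. -/
def FSfrom (p : ℕ → ℕ) (n : ℕ) : Set ℕ :=
  {m | ∃ α : Finset ℕ, α.Nonempty ∧ (∀ i ∈ α, n ≤ i) ∧ m = ∑ i ∈ α, p i}

/-- Finite sums of the sequence `p` over nonempty finite index sets. -/
def FS (p : ℕ → ℕ) : Set ℕ := FSfrom p 0

/-- An IP set: a set containing all finite sums of some sequence of natural numbers. -/
def IPSet (A : Set ℕ) : Prop :=
  ∃ p : ℕ → ℕ, (∀ i, 0 < p i) ∧ FS p ⊆ A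

/-- An IP* set: a set meeting every IP set. -/
def IPStar (A : Set ℕ) : Prop :=
  ∀ B : Set ℕ, IPSet B → (A ∩ B).Nonempty

/-- A syndetic set: a set with bounded gaps. -/
def Syndetic (S : Set ℕ) : Prop :=
  ∃ N : ℕ, ∀ m : ℕ, ∃ k ∈ S, m ≤ k ∧ k ≤ m + N

/-- A thick set: a set containing arbitrarily long runs of consecutive integers. -/
def Thick (S : Set ℕ) : Prop :=
  ∀ n : ℕ, ∃ m : ℕ, ∀ i ≤ n, m + i ∈ S

/-- A piecewise syndetic set: an intersection of a syndetic set with a thick set. -/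
def PiecewiseSyndetic (A : Set ℕ) : Prop :=
  ∃ S₁ S₂ : Set ℕ, Syndetic S₁ ∧ Thick S₂ ∧ A = S₁ ∩ S₂

/-- A thickly syndetic set: a set meeting every piecewise syndetic set. -/
def ThicklySyndetic (A : Set ℕ) : Prop :=
  ∀ B : Set ℕ, PiecewiseSyndetic B → (A ∩ B).Nonempty

/-- `x` is `F`-recurrent for the family `F` if `N(x,U) ∈ F` for every neighborhood `U`. -/
def FRecurrentPt {X : Type} [TopologicalSpace X] (F : Set (Set ℕ)) (T : X → X) (x : X) :
    Prop :=
  ∀ U ∈ nhds x, retTimes T x U ∈ F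

/-- `x` is `F`-product recurrent: `(x,y)` is recurrent for every `F`-recurrent point `y`
in any topological dynamical system `(Y,S)`. -/
def FProductRecurrent {X : Type} [TopologicalSpace X] (F : Set (Set ℕ)) (T : X → X)
    (x : X) : Prop :=
  ∀ (Y : Type) [MetricSpace Y] [CompactSpace Y] (S : Y → Y),
    Continuous S → Function.Surjective S →
      ∀ y : Y, FRecurrentPt F S y → RecurrentPt (Prod.map T S) (x, y)

/-- A joining of `(X,T)` and `(Y,S)`: a nonempty closed invariant subset of `X × Y`
projecting onto both coordinates. -/
def Joining {X Y : Type} [TopologicalSpace X] [TopologicalSpace Y]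
    (T : X → X) (S : Y → Y) (J : Set (X × Y)) : Prop :=
  J.Nonempty ∧ IsClosed J ∧ Set.MapsTo (Prod.map T S) J J ∧
    Prod.fst '' J = Set.univ ∧ Prod.snd '' J = Set.univ

/-- Two systems are disjoint if their only joining is the full product. -/
def DisjointSys {X Y : Type} [TopologicalSpace X] [TopologicalSpace Y]
    (T : X → X) (S : Y → Y) : Prop :=
  ∀ J : Set (X × Y), Joining T S J → J = Set.univ

/-- Property (★) of a point: for each neighborhood `V` of `x` there is `n` such that for
every finite set `S` whose distinct elements are at distance `≥ n`, some common shift `ℓ`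
puts all of `T^{s+ℓ} x`, `s ∈ S`, inside `V`. -/
def StarProp {X : Type} [TopologicalSpace X] (T : X → X) (x : X) : Prop :=
  ∀ V ∈ nhds x, ∃ n : ℕ, ∀ S : Finset ℕ,
    (∀ s ∈ S, ∀ t ∈ S, s < t → n ≤ t - s) →
      ∃ ℓ : ℕ, ∀ s ∈ S, T^[s + ℓ] x ∈ V

/-- `F` is an independence set for the pair `(U₀, U₁)`. -/
def IndepSet {X : Type} (T : X → X) (U₀ U₁ : Set X) (F : Set ℕ) : Prop :=
  ∀ J : Finset ℕ, ↑J ⊆ F → J.Nonempty → ∀ s : ℕ → Bool,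
    (⋂ j ∈ J, T^[j] ⁻¹' (if s j then U₁ else U₀)).Nonempty

/-!
Work in `βℕ` with its addition, for which `(p + q)-lim Tⁿ x = p-lim Tⁿ (q-lim Tᵐ x)`. The
nonprincipal ultrafilters `p` with `p-lim Sⁿ z = z` form a closed subsemigroup of `βℕ`, nonempty
because `z` is recurrent, so by Ellis–Numakura it contains an idempotent `u`. Put
`y = u-lim Tⁿ x`. Idempotence gives `u-lim Tⁿ y = (u + u)-lim Tⁿ x = y`, so `Tⁿ x` and `Tⁿ y`
both tend to `y` along `u` (proximality), and `(Tⁿ y, Sⁿ z) → (y, z)` along `u`, which is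
recurrence because `u` is nonprincipal (without that, `u = pure 0` would do).
-/

attribute [local instance] Ultrafilter.add Ultrafilter.addSemigroup

theorem recurrentPt_iff_exists_ultrafilter {X : Type} [TopologicalSpace X] {T : X → X} {x : X} :
    RecurrentPt T x ↔
      ∃ u : Ultrafilter ℕ, (u : Filter ℕ) ≤ atTop ∧ Tendsto (T^[·] x) u (𝓝 x) := by
  simp only [← mapClusterPt_iff_ultrafilter, mapClusterPt_iff_frequently,
    Nat.frequently_atTop_iff_infinite]
  rfl

theorem proximalPair_of_tendsto {X : Type} [TopologicalSpace X] [FirstCountableTopology X]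
    {T : X → X} {x y w : X} {l : Filter ℕ} [l.NeBot] (hx : Tendsto (T^[·] x) l (𝓝 w))
    (hy : Tendsto (T^[·] y) l (𝓝 w)) : ProximalPair T x y := by
  have hw : (w, w) ∈ closure (range fun n => (T^[n] x, T^[n] y)) :=
    mem_closure_of_tendsto (hx.prodMk_nhds hy) (.of_forall fun n => mem_range_self n)
  obtain ⟨s, hs, hlim⟩ := mem_closure_iff_seq_limit.mp hw
  choose u hu using hs
  obtain rfl : s = fun i => (T^[u i] x, T^[u i] y) := funext fun i => (hu i).symm
  exact ⟨u, w, (continuous_fst.tendsto _).comp hlim, (continuous_snd.tendsto _).comp hlim⟩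

theorem isClosed_setOf_ultrafilter_le {α : Type} (F : Filter α) :
    IsClosed {p : Ultrafilter α | ↑p ≤ F} := by
  have : {p : Ultrafilter α | ↑p ≤ F} = ⋂ s ∈ F, {p | s ∈ p} :=
    Set.ext fun p => by simp [Filter.le_def]
  rw [this]
  exact isClosed_biInter fun s _ => ultrafilter_isClosed_basic s

theorem tendsto_iterate_add {X : Type} [TopologicalSpace X] {T : X → X} (hT : Continuous T)
    {p q : Ultrafilter ℕ} {x w v : X} (hq : Tendsto (T^[·] x) q (𝓝 w))
    (hp : Tendsto (T^[·] w) p (𝓝 v)) : Tendsto (T^[·] x) ↑(p + q) (𝓝 v) := by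
  rw [(nhds_basis_opens v).tendsto_right_iff]
  rintro V ⟨hvV, hV⟩
  rw [Ultrafilter.eventually_add]
  filter_upwards [hp (hV.mem_nhds hvV)] with n hn
  filter_upwards [((hT.iterate n).tendsto w).comp hq (hV.mem_nhds hn)] with m hm
  rwa [iterate_add_apply]

theorem exists_idempotent_ultrafilter_tendsto_iterate {Y : Type} [TopologicalSpace Y]
    {S : Y → Y} (hS : Continuous S) {z : Y} (hz : RecurrentPt S z) :
    ∃ u : Ultrafilter ℕ, u + u = u ∧ (u : Filter ℕ) ≤ atTop ∧ Tendsto (S^[·] z) u (𝓝 z) := by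
  let A : Set (Ultrafilter ℕ) := {p | ↑p ≤ atTop ⊓ comap (S^[·] z) (𝓝 z)}
  have hA : ∀ p, p ∈ A ↔ (p : Filter ℕ) ≤ atTop ∧ Tendsto (S^[·] z) p (𝓝 z) := fun p => by
    rw [tendsto_iff_comap, ← le_inf_iff]; rfl
  have hA_add : ∀ p ∈ A, ∀ q ∈ A, p + q ∈ A := by
    simp only [hA]
    rintro p ⟨-, hp⟩ q ⟨hq_atTop, hq⟩
    refine ⟨atTop_basis.ge_iff.mpr fun N _ => ?_, tendsto_iterate_add hS hq hp⟩
    change ∀ᶠ k in ↑(p + q), N ≤ k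
    rw [Ultrafilter.eventually_add]
    exact .of_forall fun n =>
      Eventually.mono (hq_atTop (Ici_mem_atTop N)) fun m hm => le_add_left hm
  obtain ⟨u₀, hu₀⟩ := recurrentPt_iff_exists_ultrafilter.mp hz
  obtain ⟨u, hu, huu⟩ := exists_idempotent_in_compact_add_subsemigroup
    Ultrafilter.continuous_add_left A ⟨u₀, (hA u₀).mpr hu₀⟩
    (isClosed_setOf_ultrafilter_le _).isCompact hA_add
  exact ⟨u, huu, (hA u).mp hu⟩

theorem exists_tendsto_iterate_of_add_self {X : Type} [TopologicalSpace X] [CompactSpace X]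
    [T2Space X] {T : X → X} (hT : Continuous T) {u : Ultrafilter ℕ} (hu : u + u = u) (x : X) :
    ∃ y, Tendsto (T^[·] x) u (𝓝 y) ∧ Tendsto (T^[·] y) u (𝓝 y) := by
  have hlim (f : ℕ → X) : ∃ a, Tendsto f u (𝓝 a) := ⟨_, (u.map f).le_nhds_lim⟩
  obtain ⟨y, hy⟩ := hlim (T^[·] x)
  obtain ⟨v, hv⟩ := hlim (T^[·] y)
  have hxv : Tendsto (T^[·] x) u (𝓝 v) := hu ▸ tendsto_iterate_add hT hy hv
  exact ⟨y, hy, tendsto_nhds_unique hxv hy ▸ hv⟩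

theorem statement_2_general {X Y : Type} [MetricSpace X] [CompactSpace X]
    [MetricSpace Y]
    (T : X → X) (hTc : Continuous T)
    (S : Y → Y) (hSc : Continuous S)
    (z : Y) (hz : RecurrentPt S z) (x : X) :
    ∃ y ∈ orbitClosure T x,
      ProximalPair T x y ∧ RecurrentPt (Prod.map T S) (y, z) := by
  obtain ⟨u, huu, hu_atTop, hz_u⟩ := exists_idempotent_ultrafilter_tendsto_iterate hSc hz
  obtain ⟨y, hxy, hyy⟩ := exists_tendsto_iterate_of_add_self hTc huu x
  refine ⟨y, mem_closure_of_tendsto hxy (.of_forall fun n => mem_range_self n),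
    proximalPair_of_tendsto hxy hyy, recurrentPt_iff_exists_ultrafilter.mpr ⟨u, hu_atTop, ?_⟩⟩
  simpa only [Prod.map_iterate, Prod.map_apply] using hyy.prodMk_nhds hz_u

/-- If `z` is a recurrent point of `(Y,S)`, then for every `x ∈ X` there is
`y` in the orbit closure of `x` such that `(x,y)` is proximal and `(y,z)` is a recurrent
point of the product system. -/
theorem statement_2 {X Y : Type} [MetricSpace X] [CompactSpace X]
    [MetricSpace Y] [CompactSpace Y]
    (T : X → X) (hTc : Continuous T) (hTs : Function.Surjective T)
    (S : Y → Y) (hSc : Continuous S) (hSs : Function.Surjective S)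
    (z : Y) (hz : RecurrentPt S z) (x : X) :
    ∃ y ∈ orbitClosure T x,
      ProximalPair T x y ∧ RecurrentPt (Prod.map T S) (y, z) :=
  statement_2_general T hTc S hSc z hz x

end PaperFormal
end

section
/- (Auslander–Ellis theorem.) For every topological dynamical system (X,T) and every x ∈ X there exists a minimal point y in the orbit closure of x such that the pair (x,y) is proximal. -/
open Set Filter Topology Function

namespace PaperFormal

/-- Ellis–Numakura for function composition. -/
lemma ellisIdem {X : Type} [TopologicalSpace X] [T2Space X] (s : Set (X → X))
    (hne : s.Nonempty) (hc : IsCompact s)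
    (hcomp : ∀ f ∈ s, ∀ g ∈ s, f ∘ g ∈ s) : ∃ u ∈ s, u ∘ u = u := by
  letI : Semigroup (X → X) := { mul := fun f g => f ∘ g, mul_assoc := fun _ _ _ => rfl }
  obtain ⟨u, hu, huu⟩ := exists_idempotent_in_compact_subsemigroup
    (M := X → X) (fun r => continuous_pi fun x => continuous_apply (r x)) s hne hc hcomp
  exact ⟨u, hu, huu⟩

/-- Existence of a minimal subset inside a nonempty closed invariant set. -/
lemma exists_minimal_subset {X : Type} [TopologicalSpace X] [CompactSpace X] [T2Space X]
    (T : X → X) (A : Set X) (hA : A.Nonempty) (hAc : IsClosed A) (hAi : Set.MapsTo T A A) :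
    ∃ M ⊆ A, IsMinimalSet T M := by
  set S : Set (Set X) := {B | B.Nonempty ∧ IsClosed B ∧ Set.MapsTo T B B} with hS
  have hzorn : ∀ c ⊆ S, IsChain (· ⊆ ·) c → c.Nonempty → ∃ lb ∈ S, ∀ s ∈ c, lb ⊆ s := by
    intro c hcS hchain hcne
    refine ⟨⋂₀ c, ⟨?_, isClosed_sInter fun t ht => (hcS ht).2.1, fun m hm => ?_⟩,
      fun s hs => Set.sInter_subset_of_mem hs⟩
    · haveI : Nonempty c := hcne.coe_sort
      have := IsCompact.nonempty_iInter_of_directed_nonempty_isCompact_isClosed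
        ((↑) : c → Set X)
        (DirectedOn.directed_val (IsChain.directedOn hchain.symm))
        (fun i => (hcS i.prop).1)
        (fun i => (hcS i.prop).2.1.isCompact)
        (fun i => (hcS i.prop).2.1)
      rwa [Set.sInter_eq_iInter]
    · rw [Set.mem_sInter] at hm ⊢
      exact fun t ht => (hcS ht).2.2 (hm t ht)
  obtain ⟨M, hMA, hMmin⟩ := zorn_superset_nonempty S hzorn A ⟨hA, hAc, hAi⟩
  obtain ⟨hMne, hMc, hMi⟩ := hMmin.prop
  exact ⟨M, hMA, hMne, hMc, hMi, fun B hBM hBne hBc hBi =>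
    hMmin.eq_of_subset ⟨hBne, hBc, hBi⟩ hBM⟩

/-- Auslander–Ellis: for every `x` there is a minimal point `y` in the orbit
closure of `x` with `(x,y)` proximal. -/
theorem statement_3 {X : Type} [MetricSpace X] [CompactSpace X] (T : X → X)
    (hTc : Continuous T) (hTs : Function.Surjective T) (x : X) :
    ∃ y ∈ orbitClosure T x, IsMinimalPt T y ∧ ProximalPair T x y := by
  -- The enveloping semigroup
  set E : Set (X → X) := closure (Set.range fun n : ℕ => (T^[n] : X → X)) with hE
  have hEc : IsClosed E := isClosed_closure
  have hEcomp : IsCompact E := hEc.isCompact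
  have hiter : ∀ n : ℕ, (T^[n] : X → X) ∈ E := fun n => subset_closure ⟨n, rfl⟩
  -- every element of E maps each closed invariant set into itself
  have hinv : ∀ f ∈ E, ∀ B : Set X, IsClosed B → Set.MapsTo T B B → Set.MapsTo f B B := by
    intro f hf B hBc hBi b hb
    have hcl : IsClosed {g : X → X | g b ∈ B} := hBc.preimage (continuous_apply b)
    have : E ⊆ {g : X → X | g b ∈ B} := by
      rw [hE]
      apply closure_minimal _ hcl
      rintro _ ⟨n, rfl⟩
      exact hBi.iterate n hb
    exact this hf
  -- E is closed under composition
  have hEmul : ∀ f ∈ E, ∀ g ∈ E, f ∘ g ∈ E := by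
    have step1 : ∀ n : ℕ, ∀ g ∈ E, (T^[n] : X → X) ∘ g ∈ E := by
      intro n g hg
      have hcont : Continuous fun g : X → X => (T^[n] : X → X) ∘ g :=
        continuous_pi fun z => (hTc.iterate n).comp (continuous_apply z)
      have : E ⊆ {g : X → X | (T^[n] : X → X) ∘ g ∈ E} := by
        rw [hE]
        apply closure_minimal _ (hEc.preimage hcont)
        rintro _ ⟨m, rfl⟩
        show (T^[n] : X → X) ∘ T^[m] ∈ E
        have := hiter (n + m)
        rwa [Function.iterate_add] at this
      exact this hg
    intro f hf g hg
    have hcont : Continuous fun f : X → X => f ∘ g :=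
      continuous_pi fun z => continuous_apply (g z)
    have : E ⊆ {f : X → X | f ∘ g ∈ E} := by
      rw [hE]
      apply closure_minimal _ (hEc.preimage hcont)
      rintro _ ⟨n, rfl⟩
      exact step1 n g hg
    exact this hf
  -- the orbit closure of x is the image of E under evaluation at x
  have himg : orbitClosure T x ⊆ (fun f : X → X => f x) '' E := by
    have hcpt : IsCompact ((fun f : X → X => f x) '' E) :=
      hEcomp.image (continuous_apply x)
    apply closure_minimal _ hcpt.isClosed
    rintro _ ⟨n, rfl⟩
    exact ⟨T^[n], hiter n, rfl⟩
  -- orbit closures are invariant and closed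
  have horbinv : ∀ b : X, Set.MapsTo T (orbitClosure T b) (orbitClosure T b) := by
    intro b
    have h1 : Set.MapsTo T (Set.range fun n : ℕ => T^[n] b)
        (Set.range fun n : ℕ => T^[n] b) := by
      rintro _ ⟨n, rfl⟩
      exact ⟨n + 1, by simp [Function.iterate_succ_apply']⟩
    exact h1.closure hTc
  have horbcl : ∀ b : X, IsClosed (orbitClosure T b) := fun b => isClosed_closure
  have horbne : ∀ b : X, (orbitClosure T b).Nonempty :=
    fun b => ⟨b, subset_closure ⟨0, rfl⟩⟩
  -- take a minimal subset of the orbit closure of x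
  obtain ⟨M, hMsub, hMne, hMc, hMi, hMmin⟩ :=
    exists_minimal_subset T (orbitClosure T x) (horbne x) (horbcl x) (horbinv x)
  -- the subsemigroup A = {f ∈ E | f x ∈ M}
  set A : Set (X → X) := E ∩ (fun f : X → X => f x) ⁻¹' M with hA
  have hAne : A.Nonempty := by
    obtain ⟨m, hm⟩ := hMne
    obtain ⟨f, hfE, hfx⟩ := himg (hMsub hm)
    exact ⟨f, hfE, by simpa [hfx] using hm⟩
  have hAcpt : IsCompact A :=
    (hEc.inter (hMc.preimage (continuous_apply x))).isCompact
  have hAmul : ∀ f ∈ A, ∀ g ∈ A, f ∘ g ∈ A := by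
    rintro f ⟨hfE, hfM⟩ g ⟨hgE, hgM⟩
    exact ⟨hEmul f hfE g hgE, hinv f hfE M hMc hMi hgM⟩
  obtain ⟨u, huA, huu⟩ := ellisIdem A hAne hAcpt hAmul
  obtain ⟨huE, huM⟩ := huA
  set y : X := u x with hy
  have hyM : y ∈ M := huM
  have huy : u y = y := congrFun huu x
  refine ⟨y, hMsub hyM, ?_, ?_⟩
  · -- minimality: the orbit closure of y is M
    have horb_eq : orbitClosure T y = M := by
      have hsub : orbitClosure T y ⊆ M := by
        apply closure_minimal _ hMc
        rintro _ ⟨n, rfl⟩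
        exact hMi.iterate n hyM
      exact hMmin _ hsub (horbne y) (horbcl y) (horbinv y)
    rw [IsMinimalPt, horb_eq]
    exact ⟨hMne, hMc, hMi, hMmin⟩
  · -- proximality: choose a sequence approximating u at both x and y
    have hpick : ∀ k : ℕ, ∃ n : ℕ,
        dist (T^[n] x) y < 1 / (k + 1) ∧ dist (T^[n] y) y < 1 / (k + 1) := by
      intro k
      have hpos : (0 : ℝ) < 1 / (k + 1) := by positivity
      have hopen : IsOpen ((fun f : X → X => f x) ⁻¹' Metric.ball y (1 / (k + 1)) ∩
          (fun f : X → X => f y) ⁻¹' Metric.ball y (1 / (k + 1))) :=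
        (Metric.isOpen_ball.preimage (continuous_apply x)).inter
          (Metric.isOpen_ball.preimage (continuous_apply y))
      have humem : u ∈ (fun f : X → X => f x) ⁻¹' Metric.ball y (1 / (k + 1)) ∩
          (fun f : X → X => f y) ⁻¹' Metric.ball y (1 / (k + 1)) := by
        constructor
        · simp only [Set.mem_preimage, Metric.mem_ball, ← hy, dist_self]
          exact hpos
        · simp only [Set.mem_preimage, Metric.mem_ball, huy, dist_self]
          exact hpos
      obtain ⟨_, ⟨h1, h2⟩, ⟨n, rfl⟩⟩ :=
        mem_closure_iff.mp huE _ hopen humem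
      exact ⟨n, Metric.mem_ball.mp h1, Metric.mem_ball.mp h2⟩
    choose v hv1 hv2 using hpick
    have htend : ∀ w : ℕ → X, (∀ k, dist (w k) y < 1 / (k + 1)) →
        Tendsto w atTop (nhds y) := by
      intro w hw
      rw [Metric.tendsto_atTop]
      intro ε hε
      obtain ⟨N, hN⟩ := exists_nat_one_div_lt hε
      refine ⟨N, fun n hn => lt_trans (lt_of_lt_of_le (hw n) ?_) hN⟩
      apply one_div_le_one_div_of_le (by positivity)
      exact_mod_cast Nat.succ_le_succ hn
    exact ⟨v, y, htend _ hv1, htend _ hv2⟩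

end PaperFormal
end

section
/- Let (X,T) be a topological dynamical system and x ∈ X. The following are equivalent: (1) x is a distal point; (2) x is product recurrent, i.e. for every t.d.s. (Y,S) and every recurrent point y ∈ Y, the pair (x,y) is a recurrent point of the product system (X×Y, T×S); (3) for every t.d.s. (Y,S) and every minimal point y ∈ Y, the pair (x,y) is a minimal point of the product system (X×Y, T×S); (4) x is IP*-recurrent, i.e. N(x,U) is an IP* set for every neighborhood U of x. -/
/-!
Everything is read off the Ellis action `p · x = lim_{n → p} Tⁿ x` of `βℕ`, which satisfies
`(p + q) · x = p · (q · x)`.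

A distal `x` is fixed by every idempotent `u`, because `u · x` is proximal to `x`; by Hindman's
theorem (each member of an idempotent ultrafilter contains an IP set) so is an IP*-recurrent `x`.
If `x` is fixed by every idempotent, then `(x, y)` is fixed by any idempotent fixing `y`. A
recurrent `y` is fixed by a nonprincipal idempotent and a minimal `y` by an idempotent of a
minimal left ideal of `βℕ`, and conversely points fixed by such ultrafilters are recurrent,
resp. minimal.

If `(x, y)` is minimal for every minimal `y`, then `x` is minimal; for `y` in its orbit closure
proximal to `x`, the minimal point `(x, y)` has some `(z, z)` in its orbit closure and hence lies
in the orbit closure of `(z, z)`, so `x = y`.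

Finally, given an IP set `FS p`, pass to block sums `q` of `p` that are super-increasing. The
indicator of `FS q ∪ {0}` is a recurrent point of the shift on `{0,1}^ℕ` that visits the
cylinder `[1]` exactly at the times in `FS q ∪ {0}`, so a return of `(x, 1_{FS q ∪ {0}})` to
`U × [1]` is a time in `N(x, U) ∩ FS p`.
-/

open Set Filter Topology Function

namespace PaperFormal

attribute [local instance] Ultrafilter.add Ultrafilter.addSemigroup

section EllisAction

variable {X Y : Type} [TopologicalSpace X] [TopologicalSpace Y] {T : X → X} {S : Y → Y}

noncomputable def ellisAct (T : X → X) (x : X) (p : Ultrafilter ℕ) : X :=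
  Ultrafilter.extend (fun n => T^[n] x) p

theorem ellisAct_pure [T2Space X] (x : X) (n : ℕ) : ellisAct T x (pure n) = T^[n] x :=
  ultrafilter_extend_pure _ n

variable [CompactSpace X] [T2Space X] [CompactSpace Y] [T2Space Y]

theorem continuous_ellisAct (T : X → X) (x : X) : Continuous (ellisAct T x) :=
  continuous_ultrafilter_extend _

theorem ellisAct_eq_iff {x z : X} {p : Ultrafilter ℕ} :
    ellisAct T x p = z ↔ Tendsto (fun n => T^[n] x) p (𝓝 z) :=
  ultrafilter_extend_eq_iff

theorem tendsto_ellisAct (T : X → X) (x : X) (p : Ultrafilter ℕ) :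
    Tendsto (fun n => T^[n] x) p (𝓝 (ellisAct T x p)) :=
  ellisAct_eq_iff.1 rfl

theorem ellisAct_pure_add (hT : Continuous T) (x : X) (m : ℕ) (q : Ultrafilter ℕ) :
    ellisAct T x (pure m + q) = T^[m] (ellisAct T x q) := by
  refine ellisAct_eq_iff.2 fun s hs => ?_
  rw [Filter.mem_map, ← Filter.eventually_mem_set, Ultrafilter.eventually_add,
    Ultrafilter.coe_pure, eventually_pure]
  filter_upwards [(hT.iterate m).tendsto _ |>.comp (tendsto_ellisAct T x q) hs] with n hn
  rwa [Set.mem_preimage, iterate_add_apply]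

theorem ellisAct_add (hT : Continuous T) (x : X) (p q : Ultrafilter ℕ) :
    ellisAct T x (p + q) = ellisAct T (ellisAct T x q) p := by
  refine congrFun (denseRange_pure.equalizer ((continuous_ellisAct T x).comp
    (Ultrafilter.continuous_add_left q)) (continuous_ellisAct _ _) (funext fun m => ?_)) p
  simp only [comp_apply, ellisAct_pure_add hT, ellisAct_pure]

theorem ellisAct_prodMap (x : X) (y : Y) (p : Ultrafilter ℕ) :
    ellisAct (Prod.map T S) (x, y) p = (ellisAct T x p, ellisAct S y p) := by
  refine ellisAct_eq_iff.2 ?_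
  simp only [Prod.map_iterate, nhds_prod_eq]
  exact (tendsto_ellisAct T x p).prodMk (tendsto_ellisAct S y p)

theorem orbitClosure_eq_range_ellisAct (T : X → X) (x : X) :
    orbitClosure T x = range (ellisAct T x) := by
  refine subset_antisymm (closure_minimal ?_ (isCompact_range (continuous_ellisAct T x)).isClosed)
    (range_subset_iff.2 fun p => mem_closure_of_tendsto (tendsto_ellisAct T x p)
      (Eventually.of_forall fun n => mem_range_self n))
  rintro _ ⟨n, rfl⟩
  exact ⟨pure n, ellisAct_pure x n⟩

theorem ellisAct_mem_orbitClosure (T : X → X) (x : X) (p : Ultrafilter ℕ) :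
    ellisAct T x p ∈ orbitClosure T x := by
  rw [orbitClosure_eq_range_ellisAct]
  exact mem_range_self p

end EllisAction

section MinimalPoints

variable {X Y : Type} [TopologicalSpace X] [CompactSpace X] [T2Space X]
  [TopologicalSpace Y] [CompactSpace Y] [T2Space Y] {T : X → X} {S : Y → Y}

theorem ellisAct_mem_of_mapsTo {B : Set X} (hB : IsClosed B) (hBT : MapsTo T B B) {w : X}
    (hw : w ∈ B) (p : Ultrafilter ℕ) : ellisAct T w p ∈ B :=
  hB.mem_of_tendsto (tendsto_ellisAct T w p) (Eventually.of_forall fun n => hBT.iterate n hw)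

theorem mapsTo_orbitClosure (hT : Continuous T) (x : X) :
    MapsTo T (orbitClosure T x) (orbitClosure T x) := by
  rw [orbitClosure_eq_range_ellisAct]
  rintro _ ⟨p, rfl⟩
  exact ⟨pure 1 + p, by rw [ellisAct_pure_add hT, iterate_one]⟩

theorem isMinimalPt_iff (hT : Continuous T) {z : X} :
    IsMinimalPt T z ↔ ∀ p, ∃ q, ellisAct T z (q + p) = z := by
  have hz : z ∈ orbitClosure T z := subset_closure ⟨0, rfl⟩
  simp_rw [ellisAct_add hT]
  constructor
  · rintro ⟨-, -, -, hmin⟩ p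
    have hsub : orbitClosure T (ellisAct T z p) ⊆ orbitClosure T z := by
      rw [orbitClosure_eq_range_ellisAct T (ellisAct T z p)]
      rintro _ ⟨q, rfl⟩
      exact ellisAct_mem_of_mapsTo isClosed_closure (mapsTo_orbitClosure hT z)
        (ellisAct_mem_orbitClosure T z p) q
    have heq := hmin _ hsub ⟨_, subset_closure ⟨0, rfl⟩⟩ isClosed_closure
      (mapsTo_orbitClosure hT _)
    rwa [← heq, orbitClosure_eq_range_ellisAct] at hz
  · intro h
    refine ⟨⟨z, hz⟩, isClosed_closure, mapsTo_orbitClosure hT z,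
      fun B hBsub ⟨w, hw⟩ hB hBT => subset_antisymm hBsub ?_⟩
    obtain ⟨p, rfl⟩ : w ∈ range (ellisAct T z) := by
      rw [← orbitClosure_eq_range_ellisAct]
      exact hBsub hw
    obtain ⟨q, hq⟩ := h p
    rw [orbitClosure_eq_range_ellisAct]
    rintro _ ⟨r, rfl⟩
    have := ellisAct_mem_of_mapsTo hB hBT (ellisAct_mem_of_mapsTo hB hBT hw q) r
    rwa [hq] at this

theorem IsMinimalPt.fst (hT : Continuous T) (hS : Continuous S) {x : X} {y : Y}
    (h : IsMinimalPt (Prod.map T S) (x, y)) : IsMinimalPt T x := by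
  refine (isMinimalPt_iff hT).2 fun p => ?_
  obtain ⟨q, hq⟩ := (isMinimalPt_iff (hT.prodMap hS)).1 h p
  rw [ellisAct_prodMap] at hq
  exact ⟨q, congrArg Prod.fst hq⟩

theorem IsMinimalPt.of_mem_orbitClosure (hT : Continuous T) {x y : X} (hx : IsMinimalPt T x)
    (hy : y ∈ orbitClosure T x) : IsMinimalPt T y := by
  rw [orbitClosure_eq_range_ellisAct] at hy
  obtain ⟨p, rfl⟩ := hy
  refine (isMinimalPt_iff hT).2 fun p' => ?_
  obtain ⟨r, hr⟩ := (isMinimalPt_iff hT).1 hx (p' + p)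
  refine ⟨p + r, ?_⟩
  rw [← ellisAct_add hT, show p + r + p' + p = p + (r + (p' + p)) by simp only [add_assoc],
    ellisAct_add hT, hr]

theorem IsMinimalPt.eq_of_ellisAct_eq (hT : Continuous T) {x y : X}
    (h : IsMinimalPt (Prod.map T T) (x, y)) {p : Ultrafilter ℕ}
    (hp : ellisAct T x p = ellisAct T y p) : x = y := by
  obtain ⟨q, hq⟩ := (isMinimalPt_iff (hT.prodMap hT)).1 h p
  rw [ellisAct_add (hT.prodMap hT), ellisAct_prodMap x y, ← hp, ellisAct_prodMap] at hq
  obtain ⟨hx, hy⟩ := Prod.mk.inj hq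
  exact hx.symm.trans hy

end MinimalPoints

section LeftIdeals

variable {M : Type*} [AddSemigroup M] [TopologicalSpace M]

structure IsClosedLeftIdeal (L : Set M) : Prop where
  nonempty : L.Nonempty
  isClosed : IsClosed L
  add_mem : ∀ p, ∀ q ∈ L, p + q ∈ L

theorem exists_minimal_isClosedLeftIdeal [CompactSpace M] [Nonempty M] :
    ∃ L : Set M, Minimal IsClosedLeftIdeal L := by
  refine (zorn_superset_nonempty {L : Set M | IsClosedLeftIdeal L} (fun c hc hchain hne =>
    ⟨⋂₀ c, ⟨?_, isClosed_sInter fun L hL => (hc hL).isClosed, fun p q hq => mem_sInter.2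
      fun L hL => (hc hL).add_mem p q (mem_sInter.1 hq L hL)⟩, fun _ => sInter_subset_of_mem⟩)
    univ ⟨univ_nonempty, isClosed_univ, fun _ _ _ => trivial⟩).imp fun L hL => hL.2
  have : Nonempty c := hne.to_subtype
  rw [sInter_eq_iInter]
  exact IsCompact.nonempty_iInter_of_directed_nonempty_isCompact_isClosed _
    (DirectedOn.directed_val (IsChain.directedOn hchain.symm)) (fun L => (hc L.2).nonempty)
    (fun L => (hc L.2).isClosed.isCompact) (fun L => (hc L.2).isClosed)

theorem range_add_eq_of_minimal [CompactSpace M] [T2Space M] (hM : ∀ r : M, Continuous (· + r))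
    {L : Set M} (hL : Minimal IsClosedLeftIdeal L) {v : M} (hv : v ∈ L) : range (· + v) = L :=
  hL.eq_of_le ⟨⟨v + v, mem_range_self v⟩, (isCompact_range (hM v)).isClosed,
      by rintro p _ ⟨r, rfl⟩; exact ⟨p + r, add_assoc p r v⟩⟩
    (range_subset_iff.2 fun r => hL.prop.add_mem r v hv)

end LeftIdeals

section Idempotents

variable {X Y : Type} [TopologicalSpace X] [CompactSpace X] [T2Space X]
  [TopologicalSpace Y] [CompactSpace Y] [T2Space Y] {T : X → X} {S : Y → Y}

theorem isMinimalPt_of_ellisAct_eq (hT : Continuous T) {L : Set (Ultrafilter ℕ)}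
    (hL : Minimal IsClosedLeftIdeal L) {u : Ultrafilter ℕ} (hu : u ∈ L) {z : X}
    (hz : ellisAct T z u = z) : IsMinimalPt T z := by
  refine (isMinimalPt_iff hT).2 fun p => ?_
  obtain ⟨q, hq : q + (p + u) = u⟩ : u ∈ range (· + (p + u)) := by
    rw [range_add_eq_of_minimal Ultrafilter.continuous_add_left hL (hL.prop.add_mem p u hu)]
    exact hu
  refine ⟨q, ?_⟩
  calc ellisAct T z (q + p) = ellisAct T (ellisAct T z u) (q + p) := by rw [hz]
    _ = ellisAct T z (q + (p + u)) := by rw [← ellisAct_add hT, add_assoc]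
    _ = z := by rw [hq, hz]

theorem IsMinimalPt.exists_idempotent (hT : Continuous T) {L : Set (Ultrafilter ℕ)}
    (hL : Minimal IsClosedLeftIdeal L) {y : X} (hy : IsMinimalPt T y) :
    ∃ u ∈ L, u + u = u ∧ ellisAct T y u = y := by
  obtain ⟨v, hv⟩ := hL.prop.nonempty
  obtain ⟨q, hq⟩ := (isMinimalPt_iff hT).1 hy v
  obtain ⟨u, ⟨huL, huy⟩, hidem⟩ := exists_idempotent_in_compact_add_subsemigroup
    Ultrafilter.continuous_add_left (L ∩ {p | ellisAct T y p = y})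
    ⟨q + v, hL.prop.add_mem q v hv, hq⟩
    (hL.prop.isClosed.inter (isClosed_eq (continuous_ellisAct T y) continuous_const)).isCompact
    fun p hp r hr =>
      ⟨hL.prop.add_mem p r hr.1, (ellisAct_add hT y p r).trans (by rw [hr.2, hp.2])⟩
  exact ⟨u, huL, hidem, huy⟩

theorem exists_isMinimalPt [Nonempty X] (hT : Continuous T) : ∃ z : X, IsMinimalPt T z := by
  obtain ⟨L, hL⟩ := exists_minimal_isClosedLeftIdeal (M := Ultrafilter ℕ)
  obtain ⟨u, hu, hidem⟩ := exists_idempotent_in_compact_add_subsemigroup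
    Ultrafilter.continuous_add_left L hL.prop.nonempty hL.prop.isClosed.isCompact
    fun p _ q hq => hL.prop.add_mem p q hq
  obtain ⟨x⟩ := ‹Nonempty X›
  exact ⟨ellisAct T x u,
    isMinimalPt_of_ellisAct_eq hT hL hu (by rw [← ellisAct_add hT, hidem])⟩

theorem isMinimalPt_prodMap_of_forall_idempotent (hT : Continuous T) (hS : Continuous S) {x : X}
    (hx : ∀ u : Ultrafilter ℕ, u + u = u → ellisAct T x u = x) {y : Y}
    (hy : IsMinimalPt S y) : IsMinimalPt (Prod.map T S) (x, y) := by
  obtain ⟨L, hL⟩ := exists_minimal_isClosedLeftIdeal (M := Ultrafilter ℕ)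
  obtain ⟨u, hu, hidem, huy⟩ := hy.exists_idempotent hS hL
  exact isMinimalPt_of_ellisAct_eq (hT.prodMap hS) hL hu
    (by rw [ellisAct_prodMap, hx u hidem, huy])

end Idempotents

section Proximality

variable {X : Type} [TopologicalSpace X] [CompactSpace X] [T2Space X] {T : X → X}

theorem ProximalPair.exists_ellisAct_eq {x y : X} (h : ProximalPair T x y) :
    ∃ p, ellisAct T x p = ellisAct T y p := by
  obtain ⟨v, z, hx, hy⟩ := h
  have key : ∀ w, Tendsto (fun i => T^[v i] w) atTop (𝓝 z) →
      ellisAct T w ((Ultrafilter.of atTop).map v) = z := fun w hw =>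
    ellisAct_eq_iff.2 (by
      rw [Ultrafilter.coe_map]
      exact tendsto_map'_iff.2 (hw.mono_left (Ultrafilter.of_le _)))
  exact ⟨_, (key x hx).trans (key y hy).symm⟩

theorem proximalPair_of_ellisAct_eq [FirstCountableTopology X] {x y : X} {p : Ultrafilter ℕ}
    (h : ellisAct T x p = ellisAct T y p) : ProximalPair T x y := by
  have hz : (ellisAct T y p, ellisAct T y p) ∈ closure (range fun n => (T^[n] x, T^[n] y)) := by
    refine mem_closure_of_tendsto (b := (p : Filter ℕ)) ?_
      (Eventually.of_forall fun n => mem_range_self n)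
    rw [nhds_prod_eq, ← h]
    exact (tendsto_ellisAct T x p).prodMk (h ▸ tendsto_ellisAct T y p)
  obtain ⟨s, hs, hlim⟩ := mem_closure_iff_seq_limit.1 hz
  choose v hv using hs
  obtain rfl : (fun i => (T^[v i] x, T^[v i] y)) = s := funext hv
  exact ⟨v, _, (continuous_fst.tendsto _).comp hlim, (continuous_snd.tendsto _).comp hlim⟩

theorem DistalPt.ellisAct_eq_of_idempotent [FirstCountableTopology X] (hT : Continuous T)
    {x : X} (hx : DistalPt T x) {u : Ultrafilter ℕ} (hu : u + u = u) : ellisAct T x u = x :=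
  hx _ (ellisAct_mem_orbitClosure T x u)
    (proximalPair_of_ellisAct_eq (p := u) (by rw [← ellisAct_add hT, hu]))

theorem DistalPt.of_isMinimalPt_prodMap (hT : Continuous T) {x : X}
    (h : ∀ y, IsMinimalPt T y → IsMinimalPt (Prod.map T T) (x, y)) : DistalPt T x := by
  have : Nonempty X := ⟨x⟩
  obtain ⟨z, hz⟩ := exists_isMinimalPt hT
  have hx : IsMinimalPt T x := (h z hz).fst hT hT
  intro y hy hxy
  obtain ⟨p, hp⟩ := hxy.exists_ellisAct_eq
  exact ((h y (hx.of_mem_orbitClosure hT hy)).eq_of_ellisAct_eq hT hp).symm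

end Proximality

section Recurrence

theorem Ultrafilter.isClosed_setOf_le_cofinite {α : Type*} :
    IsClosed {u : Ultrafilter α | (u : Filter α) ≤ cofinite} := by
  simp only [Filter.le_def, ofPred_forall]
  exact isClosed_iInter fun s => isClosed_iInter fun _ => ultrafilter_isClosed_basic s

theorem Ultrafilter.le_cofinite_add {M : Type*} [Add M] [IsLeftCancelAdd M] (p : Ultrafilter M)
    {q : Ultrafilter M} (hq : (q : Filter M) ≤ cofinite) :
    ((p + q : Ultrafilter M) : Filter M) ≤ cofinite := fun s hs =>
  (Ultrafilter.eventually_add p q (· ∈ s)).2 <| Eventually.of_forall fun n =>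
    hq (Filter.mem_cofinite.1 hs |>.preimage (add_right_injective n).injOn)

variable {X Y : Type} [TopologicalSpace X] [TopologicalSpace Y] {T : X → X} {S : Y → Y}

theorem recurrentPt_iff_mapClusterPt {x : X} :
    RecurrentPt T x ↔ MapClusterPt x cofinite (fun n => T^[n] x) := by
  simp only [RecurrentPt, retTimes, mapClusterPt_iff_frequently, frequently_cofinite_iff_infinite]

theorem recurrentPt_of_tendsto {x : X} {k : ℕ → ℕ} (hk : Tendsto k atTop atTop)
    (h : Tendsto (fun m => T^[k m] x) atTop (𝓝 x)) : RecurrentPt T x :=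
  recurrentPt_iff_mapClusterPt.2 <|
    MapClusterPt.of_comp (Nat.cofinite_eq_atTop ▸ hk) h.mapClusterPt

variable [CompactSpace X] [T2Space X] [CompactSpace Y] [T2Space Y]

theorem recurrentPt_iff_exists_ellisAct_eq {x : X} :
    RecurrentPt T x ↔
      ∃ u : Ultrafilter ℕ, (u : Filter ℕ) ≤ cofinite ∧ ellisAct T x u = x := by
  simp only [recurrentPt_iff_mapClusterPt, mapClusterPt_iff_ultrafilter, ellisAct_eq_iff]

theorem RecurrentPt.exists_idempotent (hT : Continuous T) {x : X} (hx : RecurrentPt T x) :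
    ∃ u : Ultrafilter ℕ, (u : Filter ℕ) ≤ cofinite ∧ u + u = u ∧
      ellisAct T x u = x := by
  obtain ⟨v, hv⟩ := recurrentPt_iff_exists_ellisAct_eq.1 hx
  obtain ⟨u, hu, hidem⟩ := exists_idempotent_in_compact_add_subsemigroup
    Ultrafilter.continuous_add_left
    ({p : Ultrafilter ℕ | (p : Filter ℕ) ≤ cofinite} ∩ {p | ellisAct T x p = x}) ⟨v, hv⟩
    (Ultrafilter.isClosed_setOf_le_cofinite.inter
      (isClosed_eq (continuous_ellisAct T x) continuous_const)).isCompact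
    fun p hp q hq => ⟨Ultrafilter.le_cofinite_add p hq.1,
      (ellisAct_add hT x p q).trans (by rw [hq.2, hp.2])⟩
  exact ⟨u, hu.1, hidem, hu.2⟩

theorem recurrentPt_prodMap_of_forall_idempotent (hS : Continuous S) {x : X}
    (hx : ∀ u : Ultrafilter ℕ, u + u = u → ellisAct T x u = x) {y : Y}
    (hy : RecurrentPt S y) : RecurrentPt (Prod.map T S) (x, y) := by
  obtain ⟨u, hu, hidem, huy⟩ := hy.exists_idempotent hS
  exact recurrentPt_iff_exists_ellisAct_eq.2 ⟨u, hu, by rw [ellisAct_prodMap, hx u hidem, huy]⟩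

end Recurrence

theorem FS_subset_hindmanFS (a : Stream' ℕ) : FS a.get ⊆ Hindman.FS a := by
  rintro _ ⟨α, hα, -, rfl⟩
  exact Hindman.FS.finsetSum a α hα

theorem IPStar.mem_of_idempotent {A : Set ℕ} (hA : IPStar A) (h0 : 0 ∈ A) {u : Ultrafilter ℕ}
    (hu : u + u = u) : A ∈ u := by
  by_contra hAu
  obtain ⟨a, ha⟩ :=
    Hindman.exists_FS_of_large u hu Aᶜ (Ultrafilter.compl_mem_iff_notMem.2 hAu)
  have hpos : ∀ i, 0 < a.get i := fun i =>
    Nat.pos_of_ne_zero fun h => ha (Hindman.FS.singleton a i) (h ▸ h0)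
  obtain ⟨n, hnA, hnAc⟩ := hA Aᶜ ⟨a.get, hpos, (FS_subset_hindmanFS a).trans ha⟩
  exact hnAc hnA

theorem ellisAct_eq_of_ipStar {X : Type} [TopologicalSpace X] [CompactSpace X] [T2Space X]
    {T : X → X} {x : X} (hx : ∀ U ∈ 𝓝 x, IPStar (retTimes T x U)) {u : Ultrafilter ℕ}
    (hu : u + u = u) : ellisAct T x u = x :=
  ellisAct_eq_iff.2 fun U hU =>
    (hx U hU).mem_of_idempotent (show T^[0] x ∈ U from mem_of_mem_nhds hU) hu

section Shift

variable {α : Type*}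

def shift (w : ℕ → α) : ℕ → α := fun n => w (n + 1)

theorem shift_iterate_apply (k : ℕ) (w : ℕ → α) (n : ℕ) : shift^[k] w n = w (n + k) := by
  induction k generalizing w with
  | zero => rfl
  | succ k ih => rw [iterate_succ_apply, ih]; rfl

theorem continuous_shift [TopologicalSpace α] : Continuous (shift : (ℕ → α) → ℕ → α) :=
  continuous_pi fun n => continuous_apply (n + 1)

theorem shift_surjective [Nonempty α] : Surjective (shift : (ℕ → α) → ℕ → α) :=
  fun w => ⟨fun n => n.casesOn (Classical.arbitrary α) w, rfl⟩

end Shift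

def SuperIncreasing (q : ℕ → ℕ) : Prop :=
  ∀ j, ∑ i ∈ Finset.range j, q i < q j

def subsetSums (q : ℕ → ℕ) : Set ℕ :=
  {n | ∃ α : Finset ℕ, ∑ i ∈ α, q i = n}

theorem mem_FS_of_mem_subsetSums {q : ℕ → ℕ} {n : ℕ} (h : n ∈ subsetSums q)
    (hn : n ≠ 0) : n ∈ FS q := by
  obtain ⟨α, rfl⟩ := h
  exact ⟨α, Finset.nonempty_of_sum_ne_zero hn, fun _ _ => Nat.zero_le _, rfl⟩

namespace SuperIncreasing

variable {q : ℕ → ℕ}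

theorem sum_lt (hq : SuperIncreasing q) {γ : Finset ℕ} {m : ℕ} (hγ : γ ⊆ Finset.range m) :
    ∑ i ∈ γ, q i < q m :=
  (Finset.sum_le_sum_of_subset hγ).trans_lt (hq m)

theorem strictMono (hq : SuperIncreasing q) : StrictMono q :=
  strictMono_nat_of_lt_succ fun j =>
    (Finset.single_le_sum (fun _ _ => Nat.zero_le _) (Finset.self_mem_range_succ j)).trans_lt
      (hq (j + 1))

theorem add_mem_subsetSums_iff (hq : SuperIncreasing q) {m i : ℕ}
    (hi : i < ∑ j ∈ Finset.range m, q j) :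
    q m + i ∈ subsetSums q ↔ i ∈ subsetSums q := by
  constructor
  · rintro ⟨γ, hγ⟩
    suffices hm : m ∈ γ from
      ⟨γ.erase m, by rw [← Finset.add_sum_erase γ q hm] at hγ; omega⟩
    by_contra hm
    obtain ⟨t, htγ, hmt⟩ : ∃ t ∈ γ, m < t := by
      by_contra! hle
      have := hq.sum_lt fun j hj =>
        Finset.mem_range.2 ((hle j hj).lt_of_ne (ne_of_mem_of_not_mem hj hm))
      omega
    have h1 : q t ≤ ∑ j ∈ γ, q j := Finset.single_le_sum (fun _ _ => Nat.zero_le _) htγ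
    have h2 : ∑ j ∈ Finset.range (m + 1), q j ≤ ∑ j ∈ Finset.range t, q j :=
      Finset.sum_le_sum_of_subset (Finset.range_subset_range.2 hmt)
    have h3 := hq t
    rw [Finset.sum_range_succ] at h2
    omega
  · rintro ⟨α, rfl⟩
    have hm : m ∉ α := fun hm =>
      ((Finset.single_le_sum (fun _ _ => Nat.zero_le _) hm).trans hi.le).not_gt (hq m)
    exact ⟨insert m α, Finset.sum_insert hm⟩

open scoped Classical in
theorem recurrentPt_indicator (hq : SuperIncreasing q) :
    RecurrentPt shift fun n => decide (n ∈ subsetSums q) := by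
  refine recurrentPt_of_tendsto hq.strictMono.tendsto_atTop (tendsto_pi_nhds.2 fun i => ?_)
  refine tendsto_const_nhds.congr' (eventually_atTop.2 ⟨i + 1, fun m hm => ?_⟩)
  have hi : i < ∑ j ∈ Finset.range m, q j := by
    have h1 := hq.strictMono.add_le_nat i 0
    have h2 : q i ≤ ∑ j ∈ Finset.range m, q j :=
      Finset.single_le_sum (fun _ _ => Nat.zero_le _) (Finset.mem_range.2 hm)
    have h3 := hq 0
    simp only [Finset.range_zero, Finset.sum_empty, add_zero] at h1 h3
    omega
  dsimp only
  rw [shift_iterate_apply, add_comm, hq.add_mem_subsetSums_iff hi]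

end SuperIncreasing

theorem sum_range_blockSums (p : ℕ → ℕ) {M : ℕ → ℕ} (hM : Monotone M) (m : ℕ) :
    ∑ j ∈ Finset.range m, ∑ i ∈ Finset.Ico (M j) (M (j + 1)), p i =
      ∑ i ∈ Finset.Ico (M 0) (M m), p i := by
  induction m with
  | zero => simp
  | succ m ih =>
    rw [Finset.sum_range_succ, ih, Finset.sum_Ico_consecutive _ (hM (Nat.zero_le m)) (hM m.le_succ)]

theorem FS_blockSums_subset (p : ℕ → ℕ) {M : ℕ → ℕ} (hM : StrictMono M) :
    FS (fun j => ∑ i ∈ Finset.Ico (M j) (M (j + 1)), p i) ⊆ FS p := by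
  classical
  rintro _ ⟨γ, ⟨j, hj⟩, -, rfl⟩
  refine ⟨γ.biUnion fun j => Finset.Ico (M j) (M (j + 1)),
    ⟨M j, Finset.mem_biUnion.2 ⟨j, hj, Finset.left_mem_Ico.2 (hM j.lt_succ_self)⟩⟩,
    fun _ _ => Nat.zero_le _, (Finset.sum_biUnion fun a _ b _ hab => ?_).symm⟩
  simpa [← Finset.disjoint_coe, Finset.coe_Ico] using
    hM.monotone.pairwise_disjoint_on_Ico_succ hab

theorem exists_superIncreasing_FS_subset {p : ℕ → ℕ} (hp : ∀ i, 0 < p i) :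
    ∃ q, SuperIncreasing q ∧ FS q ⊆ FS p := by
  -- block `j` has more terms than the sum of all earlier blocks, and every term is at least 1
  let M : ℕ → ℕ := fun j => Nat.rec 0 (fun _ Mj => Mj + ∑ i ∈ Finset.range Mj, p i + 1) j
  have hM : ∀ j, M (j + 1) = M j + ∑ i ∈ Finset.range (M j), p i + 1 := fun _ => rfl
  have hMmono : StrictMono M := strictMono_nat_of_lt_succ fun j => by rw [hM]; omega
  refine ⟨_, fun j => ?_, FS_blockSums_subset p hMmono⟩
  rw [sum_range_blockSums p hMmono.monotone, show M 0 = 0 from rfl, ← Finset.range_eq_Ico]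
  calc ∑ i ∈ Finset.range (M j), p i < M (j + 1) - M j := by rw [hM]; omega
    _ = (Finset.Ico (M j) (M (j + 1))).card • 1 := by simp
    _ ≤ _ := Finset.card_nsmul_le_sum _ p 1 fun i _ => hp i

open scoped Classical in
theorem ipStar_retTimes_of_recurrentPt_prodMap_shift {X : Type} [TopologicalSpace X]
    {T : X → X} {x : X}
    (h : ∀ y : ℕ → Bool, RecurrentPt shift y → RecurrentPt (Prod.map T shift) (x, y))
    {U : Set X} (hU : U ∈ 𝓝 x) : IPStar (retTimes T x U) := by
  rintro B ⟨p, hp, hpB⟩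
  obtain ⟨q, hq, hqp⟩ := exists_superIncreasing_FS_subset hp
  set y : ℕ → Bool := fun n => decide (n ∈ subsetSums q)
  have hV : (fun w : ℕ → Bool => w 0) ⁻¹' {true} ∈ 𝓝 y :=
    ((isOpen_discrete _).preimage (continuous_apply 0)).mem_nhds
      (decide_eq_true (⟨∅, Finset.sum_empty⟩ : 0 ∈ subsetSums q))
  obtain ⟨n, hn, hn0⟩ := (h y hq.recurrentPt_indicator _ (prod_mem_nhds hU hV)).exists_gt 0
  simp only [retTimes, Prod.map_iterate, Prod.map_apply, mem_prod, mem_preimage, mem_singleton_iff,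
    shift_iterate_apply, zero_add, y, decide_eq_true_eq] at hn
  exact ⟨n, hn.1, hpB (hqp (mem_FS_of_mem_subsetSums hn.2 hn0.ne'))⟩

/-- equivalence of distality, product recurrence, minimality of products with
minimal points, and IP*-recurrence. -/
theorem statement_4 {X : Type} [MetricSpace X] [CompactSpace X] (T : X → X)
    (hTc : Continuous T) (hTs : Function.Surjective T) (x : X) :
    List.TFAE [
      DistalPt T x,
      ∀ (Y : Type) [MetricSpace Y] [CompactSpace Y] (S : Y → Y),
        Continuous S → Function.Surjective S →
          ∀ y : Y, RecurrentPt S y → RecurrentPt (Prod.map T S) (x, y),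
      ∀ (Y : Type) [MetricSpace Y] [CompactSpace Y] (S : Y → Y),
        Continuous S → Function.Surjective S →
          ∀ y : Y, IsMinimalPt S y → IsMinimalPt (Prod.map T S) (x, y),
      ∀ U ∈ nhds x, IPStar (retTimes T x U)] := by
  tfae_have 1 → 2 := fun h Y _ _ S hS _ y hy =>
    recurrentPt_prodMap_of_forall_idempotent hS (fun _ hu => h.ellisAct_eq_of_idempotent hTc hu) hy
  tfae_have 2 → 4 := fun h U hU => by
    let : MetricSpace (ℕ → Bool) := PiNat.metricSpace
    exact ipStar_retTimes_of_recurrentPt_prodMap_shift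
      (fun y hy => h (ℕ → Bool) shift continuous_shift shift_surjective y hy) hU
  tfae_have 4 → 3 := fun h Y _ _ S hS _ y hy =>
    isMinimalPt_prodMap_of_forall_idempotent hTc hS (fun _ hu => ellisAct_eq_of_ipStar h hu) hy
  tfae_have 3 → 1 := fun h =>
    DistalPt.of_isMinimalPt_prodMap hTc fun y hy => h X T hTc hTs y hy
  tfae_finish

end PaperFormal
end

section
/- There is no minimal topological dynamical system with more than one point that contains a point satisfying property (★). -/
open Set Filter Topology Function

namespace PaperFormal

/-!
Suppose `x` satisfies (★) in a minimal system with at least two points, and let `V` be a closed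
neighbourhood of `x` with `V ≠ X`. Applying (★) to the arithmetic progressions
`{0, p, 2p, …, kp}` and using compactness, for every large `p` some point has its whole
`T^p`-orbit in `V`; hence `V` contains a `T^p`-minimal set `M`. The images `T^i M`, `i < p`,
are again `T^p`-minimal, so any two of them coincide or are disjoint, and by minimality of `T`
they cover `X`. Hence they are clopen, and the one containing `x` is an open set `U ≠ X` with
`T^t U = U` whenever `T^t x ∈ U`. So all return times of `x` to `U` are multiples of the
minimal period `d ≥ 2` of `U` under `T`, while (★) applied to `U` and `{0, nd + 1}` yields two
return times differing by `nd + 1`.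
-/

section MinimalSets

variable {X : Type} [TopologicalSpace X] {g : X → X}

theorem exists_isMinimalSet_subset [CompactSpace X] {C : Set X} (hC : IsClosed C)
    (hCne : C.Nonempty) (hgC : MapsTo g C C) : ∃ M ⊆ C, IsMinimalSet g M := by
  let 𝒮 : Set (Set X) := {A | A.Nonempty ∧ IsClosed A ∧ MapsTo g A A}
  have hchain :
      ∀ c ⊆ 𝒮, IsChain (· ⊆ ·) c → c.Nonempty → ∃ lb ∈ 𝒮, ∀ A ∈ c, lb ⊆ A := by
    intro c hc𝒮 hc hcne
    have : Nonempty c := hcne.to_subtype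
    have hdir : DirectedOn (· ⊇ ·) c := fun A hA B hB =>
      (hc.total hA hB).elim (fun h => ⟨A, hA, subset_rfl, h⟩)
        fun h => ⟨B, hB, h, subset_rfl⟩
    have hcl : ∀ A ∈ c, IsClosed A := fun A hA => (hc𝒮 hA).2.1
    refine ⟨⋂₀ c, ⟨?_, isClosed_sInter hcl, ?_⟩, fun A => sInter_subset_of_mem⟩
    · exact IsCompact.nonempty_sInter_of_directed_nonempty_isCompact_isClosed hdir
        (fun A hA => (hc𝒮 hA).1) (fun A hA => (hcl A hA).isCompact) hcl
    · exact fun z hz => mem_sInter.mpr fun A hA => (hc𝒮 hA).2.2 (mem_sInter.mp hz A hA)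
  obtain ⟨M, hMC, hM⟩ := zorn_superset_nonempty 𝒮 hchain C ⟨hCne, hC, hgC⟩
  exact ⟨M, hMC, hM.prop.1, hM.prop.2.1, hM.prop.2.2,
    fun B hBM hBne hBcl hgB => hM.eq_of_subset ⟨hBne, hBcl, hgB⟩ hBM⟩

theorem IsMinimalSet.eq_of_inter_nonempty {A B : Set X} (hA : IsMinimalSet g A)
    (hB : IsMinimalSet g B) (hAB : (A ∩ B).Nonempty) : A = B := by
  have hcl : IsClosed (A ∩ B) := hA.2.1.inter hB.2.1
  have hinv : MapsTo g (A ∩ B) (A ∩ B) := hA.2.2.1.inter_inter hB.2.2.1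
  exact (hA.2.2.2 _ inter_subset_left hAB hcl hinv).symm.trans
    (hB.2.2.2 _ inter_subset_right hAB hcl hinv)

theorem IsMinimalSet.image [CompactSpace X] [T2Space X] {f : X → X} {A : Set X}
    (hA : IsMinimalSet g A) (hf : Continuous f) (hfg : Function.Commute f g) :
    IsMinimalSet g (f '' A) := by
  obtain ⟨hAne, hAcl, hgA, hAmin⟩ := hA
  refine ⟨hAne.image f, (hAcl.isCompact.image hf).isClosed, ?_, fun B hBA hBne hBcl hgB => ?_⟩
  · rintro _ ⟨a, ha, rfl⟩
    exact ⟨g a, hgA ha, hfg a⟩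
  · obtain ⟨_, hfa⟩ := hBne
    obtain ⟨a, ha, rfl⟩ := hBA hfa
    have hpre : A ∩ f ⁻¹' B = A := by
      refine hAmin _ inter_subset_left ⟨a, ha, hfa⟩ (hAcl.inter (hBcl.preimage hf)) ?_
      rintro z ⟨hz, hfz⟩
      exact ⟨hgA hz, show f (g z) ∈ B from (hfg z).symm ▸ hgB hfz⟩
    refine hBA.antisymm ?_
    rintro _ ⟨z, hz, rfl⟩
    exact (hpre.symm ▸ hz : z ∈ A ∩ f ⁻¹' B).2

theorem IsMinimalSet.image_self [CompactSpace X] [T2Space X] {A : Set X}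
    (hA : IsMinimalSet g A) (hg : Continuous g) : g '' A = A :=
  let hgA := hA.image hg (Function.Commute.refl g)
  hA.2.2.2 _ hA.2.2.1.image_subset hgA.1 hgA.2.1 hgA.2.2.1

end MinimalSets

theorem isOpen_of_finite_closed_cover {X ι : Type*} [TopologicalSpace X] [Finite ι]
    {P : ι → Set X} (hP : ∀ i, IsClosed (P i)) (hcov : ⋃ i, P i = univ)
    (hPP : ∀ i j, (P i ∩ P j).Nonempty → P i = P j) (i : ι) : IsOpen (P i) := by
  have hcompl : (P i)ᶜ = ⋃ j ∈ {j | Disjoint (P j) (P i)}, P j := by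
    ext z
    simp only [mem_compl_iff, mem_iUnion, mem_ofPred_eq, exists_prop]
    constructor
    · intro hz
      obtain ⟨j, hzj⟩ := mem_iUnion.mp (hcov ▸ mem_univ z)
      refine ⟨j, not_not.mp fun hji => hz ?_, hzj⟩
      exact hPP j i (not_disjoint_iff_nonempty_inter.mp hji) ▸ hzj
    · rintro ⟨j, hji, hzj⟩ hzi
      exact hji.ne_of_mem hzj hzi rfl
  rw [← isClosed_compl_iff, hcompl]
  exact (toFinite _).isClosed_biUnion fun j _ => hP j

section MinimalSystem

variable {X : Type} [TopologicalSpace X] {T : X → X}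

theorem MinimalSys.iUnion_iterate_image_eq_univ [CompactSpace X] [T2Space X]
    (hmin : MinimalSys T) (hT : Continuous T) {p : ℕ} (hp : 0 < p) {A : Set X}
    (hAne : A.Nonempty) (hA : IsClosed A) (hTA : MapsTo T^[p] A A) :
    ⋃ i : Fin p, T^[i] '' A = univ := by
  refine hmin _ ?_ (isClosed_iUnion_of_finite fun i =>
    (hA.isCompact.image (hT.iterate i)).isClosed) ?_
  · exact (hAne.image _).mono (subset_iUnion (fun i : Fin p => T^[i] '' A) ⟨0, hp⟩)
  · rintro _ hz
    obtain ⟨i, a, ha, rfl⟩ := mem_iUnion.mp hz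
    rw [← iterate_succ_apply' T]
    by_cases hi : (i : ℕ) + 1 < p
    · exact mem_iUnion.mpr ⟨⟨i + 1, hi⟩, a, ha, rfl⟩
    · have hip : (i : ℕ) + 1 = p := by omega
      exact mem_iUnion.mpr
        ⟨⟨0, hp⟩, T^[p] a, hTA ha, show T^[p] a = T^[(i : ℕ) + 1] a by rw [hip]⟩

theorem MinimalSys.exists_nhds_retTimes_subset_dvd [CompactSpace X] [T2Space X]
    (hmin : MinimalSys T) (hT : Continuous T) {p : ℕ} (hp : 0 < p) {M : Set X}
    (hM : IsMinimalSet T^[p] M) (hMne : M ≠ univ) (x : X) :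
    ∃ U ∈ 𝓝 x, ∃ d, 2 ≤ d ∧ retTimes T x U ⊆ {t | d ∣ t} := by
  have hpieces : ∀ i : ℕ, IsMinimalSet T^[p] (T^[i] '' M) := fun i =>
    hM.image (hT.iterate i) (Function.Commute.iterate_iterate_self T i p)
  have hcov := hmin.iUnion_iterate_image_eq_univ hT hp hM.1 hM.2.1 hM.2.2.1
  obtain ⟨i, hxU⟩ := mem_iUnion.mp (hcov ▸ mem_univ x)
  set U := T^[i] '' M
  have hUopen : IsOpen U :=
    isOpen_of_finite_closed_cover (P := fun j : Fin p => T^[j] '' M) (fun j => (hpieces j).2.1)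
      hcov (fun j k => (hpieces j).eq_of_inter_nonempty (hpieces k)) i
  have hper : ∀ t ∈ retTimes T x U, IsPeriodicPt (image T) t U := fun t ht => by
    rw [IsPeriodicPt, IsFixedPt, ← image_iterate_eq, ← image_comp, ← iterate_add]
    exact (hpieces _).eq_of_inter_nonempty (hpieces i)
      ⟨T^[t] x, by rw [iterate_add, image_comp]; exact mem_image_of_mem _ hxU, ht⟩
  refine ⟨U, hUopen.mem_nhds hxU, minimalPeriod (image T) U, ?_,
    fun t ht => (hper t ht).minimalPeriod_dvd⟩
  have hpos : 0 < minimalPeriod (image T) U := by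
    refine IsPeriodicPt.minimalPeriod_pos hp ?_
    rw [IsPeriodicPt, IsFixedPt, ← image_iterate_eq]
    exact (hpieces i).image_self (hT.iterate p)
  refine (Nat.two_le_iff _).mpr ⟨hpos.ne', fun h1 => hMne ?_⟩
  have hTU : MapsTo T U U :=
    mapsTo_iff_image_subset.mpr (minimalPeriod_eq_one_iff_isFixedPt.mp h1).subset
  have hUuniv : U = univ := hmin U ⟨x, hxU⟩ (hpieces i).2.1 hTU
  have hMU : M = U := hM.eq_of_inter_nonempty (hpieces i) (by rw [hUuniv, inter_univ]; exact hM.1)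
  exact hMU.trans hUuniv

end MinimalSystem

section StarProperty

variable {X : Type} [TopologicalSpace X] {T : X → X} {x : X}

theorem StarProp.exists_closed_iterate_invariant_subset [CompactSpace X] (hx : StarProp T x)
    (hT : Continuous T) {V : Set X} (hV : V ∈ 𝓝 x) (hVcl : IsClosed V) :
    ∃ n, ∀ p ≥ n, ∃ C ⊆ V, C.Nonempty ∧ IsClosed C ∧ MapsTo T^[p] C C := by
  obtain ⟨n, hn⟩ := hx V hV
  refine ⟨n, fun p hp => ⟨⋂ j, T^[j * p] ⁻¹' V, ?_, ?_, ?_, ?_⟩⟩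
  · exact fun z hz => by simpa using mem_iInter.mp hz 0
  · have h := isCompact_univ.inter_iInter_nonempty (fun j => T^[j * p] ⁻¹' V)
      (fun j => hVcl.preimage (hT.iterate _)) fun u => ?_
    · simpa using h
    have hsep : ∀ s ∈ u.image (· * p), ∀ t ∈ u.image (· * p), s < t → n ≤ t - s := by
      simp only [Finset.mem_image]
      rintro _ ⟨i, -, rfl⟩ _ ⟨j, -, rfl⟩ hij
      rw [← Nat.sub_mul]
      exact hp.trans (Nat.le_mul_of_pos_left p
        (Nat.sub_pos_of_lt (Nat.lt_of_mul_lt_mul_right hij)))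
    obtain ⟨ℓ, hℓ⟩ := hn _ hsep
    refine ⟨T^[ℓ] x, mem_univ _, mem_iInter₂.mpr fun j hj => ?_⟩
    rw [mem_preimage, ← iterate_add_apply]
    exact hℓ _ (Finset.mem_image_of_mem _ hj)
  · exact isClosed_iInter fun j => hVcl.preimage (hT.iterate _)
  · intro z hz
    simp only [mem_iInter, mem_preimage] at hz ⊢
    intro j
    rw [← iterate_add_apply, ← add_one_mul]
    exact hz (j + 1)

theorem StarProp.not_retTimes_subset_dvd (hx : StarProp T x) {U : Set X} (hU : U ∈ 𝓝 x)
    {d : ℕ} (hd : 2 ≤ d) : ¬ retTimes T x U ⊆ {t | d ∣ t} := by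
  intro hret
  obtain ⟨n, hn⟩ := hx U hU
  have hnd : n ≤ n * d := Nat.le_mul_of_pos_right n (by omega)
  obtain ⟨ℓ, hℓ⟩ := hn {0, n * d + 1} (by
    simp only [Finset.mem_insert, Finset.mem_singleton]
    rintro s (rfl | rfl) t (rfl | rfl) hst <;> omega)
  have h0 : d ∣ ℓ := by simpa using hret (hℓ 0 (by simp))
  have h1 : d ∣ n * d + 1 + ℓ := hret (hℓ (n * d + 1) (by simp))
  have hd1 : d ∣ 1 := (Nat.dvd_add_right (dvd_mul_left d n)).mp ((Nat.dvd_add_left h0).mp h1)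
  exact absurd (Nat.eq_one_of_dvd_one hd1) (by omega)

end StarProperty

/-- no minimal system with more than one point contains a point satisfying
property (★). -/
theorem statement_10 :
    ¬ ∃ (X : Type) (_ : MetricSpace X) (_ : CompactSpace X) (T : X → X),
      Continuous T ∧ Function.Surjective T ∧ MinimalSys T ∧
        (∃ a b : X, a ≠ b) ∧ ∃ x : X, StarProp T x := by
  rintro ⟨X, _, _, T, hT, -, hmin, ⟨a, b, hab⟩, x, hx⟩
  have : Nontrivial X := ⟨a, b, hab⟩
  obtain ⟨y, hyx⟩ := exists_ne x
  have hr : 0 < dist y x / 2 := half_pos (dist_pos.mpr hyx)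
  have hy : y ∉ Metric.closedBall x (dist y x / 2) := by
    rw [Metric.mem_closedBall]
    linarith
  obtain ⟨n, hn⟩ := hx.exists_closed_iterate_invariant_subset hT
    (Metric.closedBall_mem_nhds x hr) Metric.isClosed_closedBall
  obtain ⟨C, hCV, hCne, hCcl, hTC⟩ := hn (n + 1) n.le_succ
  obtain ⟨M, hMC, hM⟩ := exists_isMinimalSet_subset hCcl hCne hTC
  obtain ⟨U, hU, d, hd, hret⟩ := hmin.exists_nhds_retTimes_subset_dvd hT n.succ_pos hM
    (fun hMuniv => hy (hCV (hMC (hMuniv ▸ mem_univ y)))) x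
  exact hx.not_retTimes_subset_dvd hU hd hret

end PaperFormal
end
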